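/- Let κ : ℂⁿ → ℂⁿ be continuously differentiable, M = {u : det J_κ(u) ≠ 0}, and suppose the complement of M is Lebesgue-null and every fiber κ⁻¹({v}) ∩ M has at most m points. Then M can be partitioned (up to a null set) into at most m measurable subsets V₁, …, V_m such that κ restricted to each V_i is injective. -/

import Mathlib

/-!
Near each point of `M` the map `κ` is injective by the inverse function theorem, so countably
many open sets cover `M`, and disjointifying them partitions `M` into measurable pieces
`W₀, W₁, …` on which `κ` is injective. A point `x ∈ Wₖ` is then put into `V_c`, where `c` is
the number of earlier pieces `Wⱼ` (`j < k`) that meet the fiber of `x`; this count is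
measurable by the Lusin–Souslin theorem, it is `< m` because those pieces together with `Wₖ`
contain distinct points of the fiber, and it strictly increases along a fiber, so `κ` is
injective on each `V_c`.
-/

open MeasureTheory Set Function

theorem LinearMap.toMatrix'_fderiv {𝕜 : Type*} [NontriviallyNormedField 𝕜] {m n : Type*}
    [Fintype m] [Fintype n] [DecidableEq n] {f : (n → 𝕜) → (m → 𝕜)} {u : n → 𝕜}
    (hf : DifferentiableAt 𝕜 f u) :
    LinearMap.toMatrix' (fderiv 𝕜 f u : (n → 𝕜) →ₗ[𝕜] (m → 𝕜)) =
      Matrix.of fun i j => fderiv 𝕜 (fun v => f v i) u (Pi.single j 1) := by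
  ext i j
  simp [LinearMap.toMatrix'_apply, fderiv_apply hf]

theorem HasStrictFDerivAt.exists_isOpen_injOn_of_det_ne_zero {𝕜 E : Type*}
    [NontriviallyNormedField 𝕜] [CompleteSpace 𝕜] [NormedAddCommGroup E] [NormedSpace 𝕜 E]
    [FiniteDimensional 𝕜 E] {f : E → E} {f' : E →L[𝕜] E} {x : E}
    (hf : HasStrictFDerivAt f f' x) (hdet : f'.det ≠ 0) :
    ∃ U, IsOpen U ∧ x ∈ U ∧ InjOn f U := by
  have := FiniteDimensional.complete 𝕜 E
  rw [← f'.coe_toContinuousLinearEquivOfDetNeZero hdet] at hf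
  exact ⟨_, (hf.toOpenPartialHomeomorph f).open_source, hf.mem_toOpenPartialHomeomorph_source,
    (hf.toOpenPartialHomeomorph f).injOn⟩

variable {X Y ι : Type*}

structure IsInjOnPartition [MeasurableSpace X] (f : X → Y) (S : Set X) (V : ι → Set X) :
    Prop where
  measurableSet : ∀ i, MeasurableSet (V i)
  pairwise_disjoint : Pairwise (Disjoint on V)
  injOn : ∀ i, InjOn f (V i)
  iUnion_eq : ⋃ i, V i = S

section Counting

variable (f : X → Y) (W : ℕ → Set X)

open Classical in
noncomputable def earlierImageCount (k : ℕ) (x : X) : ℕ :=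
  ({j ∈ Finset.range k | f x ∈ f '' W j} : Finset ℕ).card

variable {f W}

theorem earlierImageCount_lt_of_lt {k k' : ℕ} {x x' : X} (hkk' : k < k') (hx : x ∈ W k)
    (hxx' : f x = f x') : earlierImageCount f W k x < earlierImageCount f W k' x' := by
  classical
  unfold earlierImageCount
  refine Finset.card_lt_card ⟨fun j hj => ?_, fun hsub => ?_⟩
  · simp only [Finset.mem_filter, Finset.mem_range] at hj ⊢
    exact ⟨hj.1.trans hkk', hxx' ▸ hj.2⟩
  · have := hsub (Finset.mem_filter.2 ⟨Finset.mem_range.2 hkk', x, hx, hxx'⟩)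
    simp at this

theorem earlierImageCount_lt {m : ℕ} (hW : Pairwise (Disjoint on W))
    (hfib : ∀ y, (f ⁻¹' {y} ∩ ⋃ k, W k).encard ≤ m) {k : ℕ} {x : X} (hx : x ∈ W k) :
    earlierImageCount f W k x < m := by
  classical
  set F := insert k ({j ∈ Finset.range k | f x ∈ f '' W j} : Finset ℕ)
  have hwit : ∀ j ∈ F, ∃ x' ∈ W j, f x' = f x := by
    intro j hj
    rcases Finset.mem_insert.1 hj with rfl | hj
    · exact ⟨x, hx, rfl⟩
    · exact (Finset.mem_filter.1 hj).2
  have : Nonempty X := ⟨x⟩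
  choose! w hwW hwf using hwit
  have hwinj : InjOn w F := fun j hj j' hj' hjj' =>
    hW.eq (not_disjoint_iff.2 ⟨w j, hwW j hj, hjj' ▸ hwW j' hj'⟩)
  have hwfib : w '' F ⊆ f ⁻¹' {f x} ∩ ⋃ k, W k := by
    rintro _ ⟨j, hj, rfl⟩
    exact ⟨hwf j hj, mem_iUnion.2 ⟨j, hwW j hj⟩⟩
  have hcard : (F.card : ℕ∞) ≤ m := by
    rw [← encard_coe_eq_coe_finsetCard, ← hwinj.encard_image]
    exact (encard_le_encard hwfib).trans (hfib _)
  rw [Finset.card_insert_of_notMem (by simp)] at hcard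
  exact_mod_cast hcard

variable [MeasurableSpace X] [StandardBorelSpace X] [MeasurableSpace Y]
  [MeasurableSpace.CountablySeparated Y]

theorem measurable_earlierImageCount (hf : Measurable f) (hWm : ∀ k, MeasurableSet (W k))
    (hWinj : ∀ k, InjOn f (W k)) (k : ℕ) : Measurable (earlierImageCount f W k) := by
  unfold earlierImageCount
  simp only [Finset.card_filter]
  exact Finset.measurable_sum _ fun j _ => Measurable.ite
    (hf ((hWm j).image_of_measurable_injOn hf (hWinj j))) measurable_const measurable_const

theorem IsInjOnPartition.exists_fin {S : Set X} {m : ℕ} (hf : Measurable f)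
    (hW : IsInjOnPartition f S W) (hfib : ∀ y, (f ⁻¹' {y} ∩ S).encard ≤ m) :
    ∃ V : Fin m → Set X, IsInjOnPartition f S V := by
  have hfib' : ∀ y, (f ⁻¹' {y} ∩ ⋃ k, W k).encard ≤ m := hW.iUnion_eq ▸ hfib
  have hcount := measurable_earlierImageCount hf hW.measurableSet hW.injOn
  refine ⟨fun i => ⋃ k, W k ∩ earlierImageCount f W k ⁻¹' {(i : ℕ)}, ⟨?_, ?_, ?_, ?_⟩⟩
  · exact fun i => .iUnion fun k =>
      (hW.measurableSet k).inter (hcount k (measurableSet_singleton _))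
  · intro i i' hii'
    refine disjoint_left.2 fun x hx hx' => hii' (Fin.ext ?_)
    obtain ⟨k, hk, hki⟩ := mem_iUnion.1 hx
    obtain ⟨k', hk', hk'i⟩ := mem_iUnion.1 hx'
    obtain rfl := hW.pairwise_disjoint.eq (not_disjoint_iff.2 ⟨x, hk, hk'⟩)
    exact hki.symm.trans hk'i
  · intro i x hx x' hx' hxx'
    obtain ⟨k, hk, hki⟩ := mem_iUnion.1 hx
    obtain ⟨k', hk', hk'i⟩ := mem_iUnion.1 hx'
    rcases lt_trichotomy k k' with h | rfl | h
    · exact absurd (hki.trans hk'i.symm) (earlierImageCount_lt_of_lt h hk hxx').ne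
    · exact hW.injOn k hk hk' hxx'
    · exact absurd (hk'i.trans hki.symm) (earlierImageCount_lt_of_lt h hk' hxx'.symm).ne
  · refine Subset.antisymm (iUnion_subset fun i => iUnion_subset fun k => ?_) ?_
    · exact inter_subset_left.trans (hW.iUnion_eq ▸ subset_iUnion W k)
    · rw [← hW.iUnion_eq]
      exact iUnion_subset fun k x hx => mem_iUnion.2
        ⟨⟨_, earlierImageCount_lt hW.pairwise_disjoint hfib' hx⟩, mem_iUnion.2 ⟨k, hx, rfl⟩⟩

end Counting

section Topology

variable [TopologicalSpace X] {f : X → Y} {S : Set X}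

theorem exists_seq_isOpen_injOn_cover [SecondCountableTopology X]
    (hloc : ∀ x ∈ S, ∃ U, IsOpen U ∧ x ∈ U ∧ InjOn f U) :
    ∃ U : ℕ → Set X, (∀ k, IsOpen (U k)) ∧ (∀ k, InjOn f (U k)) ∧ S ⊆ ⋃ k, U k := by
  obtain ⟨T, hTc, hTsub, hTU⟩ :=
    TopologicalSpace.isOpen_sUnion_countable {U | IsOpen U ∧ InjOn f U} fun _ h => h.1
  obtain ⟨U, hU⟩ := (hTc.insert ∅).exists_eq_range (insert_nonempty _ _)
  have hUT (k) : U k ∈ insert ∅ T := hU.symm ▸ mem_range_self k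
  refine ⟨U, fun k => ?_, fun k => ?_, fun x hx => ?_⟩
  · rcases hUT k with h | h
    · exact h ▸ isOpen_empty
    · exact (hTsub h).1
  · rcases hUT k with h | h
    · exact h ▸ injOn_empty f
    · exact (hTsub h).2
  · obtain ⟨V, hV, hxV, hVinj⟩ := hloc x hx
    obtain ⟨t, ht, hxt⟩ := mem_sUnion.1 (hTU ▸ mem_sUnion_of_mem hxV ⟨hV, hVinj⟩ :
      x ∈ ⋃₀ T)
    obtain ⟨k, rfl⟩ : t ∈ range U := hU ▸ mem_insert_of_mem _ ht
    exact mem_iUnion_of_mem k hxt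

theorem IsInjOnPartition.disjointed_inter [MeasurableSpace X] [OpensMeasurableSpace X]
    (hS : MeasurableSet S) {U : ℕ → Set X} (hU : ∀ k, IsOpen (U k))
    (hUinj : ∀ k, InjOn f (U k)) (hSU : S ⊆ ⋃ k, U k) :
    IsInjOnPartition f S (disjointed fun k => U k ∩ S) where
  measurableSet := .disjointed fun k => (hU k).measurableSet.inter hS
  pairwise_disjoint := disjoint_disjointed _
  injOn k := (hUinj k).mono ((disjointed_subset _ k).trans inter_subset_left)
  iUnion_eq := by rw [iUnion_disjointed, ← iUnion_inter, inter_eq_right.2 hSU]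

theorem exists_fin_isInjOnPartition_of_locally_injOn [PolishSpace X] [MeasurableSpace X]
    [BorelSpace X] [MeasurableSpace Y] [MeasurableSpace.CountablySeparated Y] {m : ℕ}
    (hf : Measurable f) (hS : MeasurableSet S)
    (hloc : ∀ x ∈ S, ∃ U, IsOpen U ∧ x ∈ U ∧ InjOn f U)
    (hfib : ∀ y, (f ⁻¹' {y} ∩ S).encard ≤ m) :
    ∃ V : Fin m → Set X, IsInjOnPartition f S V := by
  obtain ⟨U, hU, hUinj, hSU⟩ := exists_seq_isOpen_injOn_cover hloc
  exact (IsInjOnPartition.disjointed_inter hS hU hUinj hSU).exists_fin hf hfib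

end Topology

theorem stmt_15_general (n : ℕ) (κ : (Fin n → ℂ) → (Fin n → ℂ))
    (hκ : ContDiff ℂ 1 κ)
    (M : Set (Fin n → ℂ))
    (hM : M = {u | (Matrix.of fun i j : Fin n =>
      fderiv ℂ (fun v => κ v i) u (Pi.single j 1)).det ≠ 0})
    (m : ℕ) (hfib : ∀ v : Fin n → ℂ, (κ ⁻¹' {v} ∩ M).Finite ∧ (κ ⁻¹' {v} ∩ M).ncard ≤ m) :
    ∃ V : Fin m → Set (Fin n → ℂ),
      (∀ i, MeasurableSet (V i)) ∧ (∀ i, V i ⊆ M) ∧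
      Pairwise (Function.onFun Disjoint V) ∧
      (∀ i, Set.InjOn κ (V i)) ∧
      volume (M \ ⋃ i, V i) = 0 := by
  have hM' : M = {u | (fderiv ℂ κ u).det ≠ 0} := by
    simp only [hM, ← LinearMap.toMatrix'_fderiv (hκ.differentiable one_ne_zero _),
      LinearMap.det_toMatrix']
  have hMopen : IsOpen M := hM' ▸ isOpen_ne_fun
    (ContinuousLinearMap.continuous_det.comp (hκ.continuous_fderiv one_ne_zero))
    continuous_const
  have hloc (u) (hu : u ∈ M) : ∃ U, IsOpen U ∧ u ∈ U ∧ InjOn κ U :=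
    (hκ.contDiffAt.hasStrictFDerivAt one_ne_zero).exists_isOpen_injOn_of_det_ne_zero
      (by rwa [hM'] at hu)
  obtain ⟨V, hV⟩ := exists_fin_isInjOnPartition_of_locally_injOn hκ.continuous.measurable
    hMopen.measurableSet hloc fun v => (hfib v).1.cast_ncard_eq ▸ Nat.cast_le.2 (hfib v).2
  refine ⟨V, hV.measurableSet, fun i => hV.iUnion_eq ▸ subset_iUnion V i,
    hV.pairwise_disjoint, hV.injOn, ?_⟩
  rw [hV.iUnion_eq, sdiff_self, measure_empty]

/-- a C¹ map `κ : ℂⁿ → ℂⁿ` whose critical set has measure zero and whose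
fibers meet `M = {det J_κ ≠ 0}` in at most `m` points admits a partition (up to a null
set) of `M` into `m` measurable pieces on each of which `κ` is injective. -/
theorem stmt_15 (n : ℕ) (κ : (Fin n → ℂ) → (Fin n → ℂ))
    (hκ : ContDiff ℂ 1 κ)
    (M : Set (Fin n → ℂ))
    (hM : M = {u | (Matrix.of fun i j : Fin n =>
      fderiv ℂ (fun v => κ v i) u (Pi.single j 1)).det ≠ 0})
    (hnull : volume Mᶜ = 0)
    (m : ℕ) (hfib : ∀ v : Fin n → ℂ, (κ ⁻¹' {v} ∩ M).Finite ∧ (κ ⁻¹' {v} ∩ M).ncard ≤ m) :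
    ∃ V : Fin m → Set (Fin n → ℂ),
      (∀ i, MeasurableSet (V i)) ∧ (∀ i, V i ⊆ M) ∧
      Pairwise (Function.onFun Disjoint V) ∧
      (∀ i, Set.InjOn κ (V i)) ∧
      volume (M \ ⋃ i, V i) = 0 :=
  stmt_15_general n κ hκ M hM m hfib
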